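/- Let ρ be a finite Borel measure on ℝ^n × ℝ^k that is α-super log-concave (with respect to the Euclidean norm |(y,z)|² = |y|² + |z|² on the product). Then the pushforward of ρ under the coordinate projection (y, z) ↦ y is an α-super log-concave measure on ℝ^n. -/

import Mathlib

/-!
Test the Prékopa–Leindler property of `ρ` with weight `exp (α/2 (‖y‖² + ‖z‖²))` against
`a (y) φᵣ (z)`, where `φᵣ (z) = exp (-α/2 ‖z‖²) χᵣ (z)` and `χᵣ` is a radial cutoff equal to `1` on
the ball of radius `r - 1`. Since `α ≥ 0`, `φᵣ` is log-concave, so these product test functions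
satisfy the hypothesis whenever `a, b, c` do. The factor `exp (-α/2 ‖z‖²)` cancels the fibre part
of the weight, leaving `∫ exp (α/2 ‖y‖²) a (y) χᵣ (z) dρ`, which tends to the corresponding
integral against the pushforward as `r → ∞` by dominated convergence, `ρ` being finite.
-/

open MeasureTheory Pointwise ENNReal

noncomputable section

def IsLogConcave {E : Type*} [AddCommGroup E] [Module ℝ E] (f : E → ℝ) : Prop :=
  ∀ x y : E, ∀ s t : ℝ, 0 ≤ s → 0 ≤ t → s + t = 1 →
    f x ^ s * f y ^ t ≤ f (s • x + t • y)

def PrekopaLeindler {E : Type*} [AddCommGroup E] [Module ℝ E] [TopologicalSpace E]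
    [MeasurableSpace E] (ρ : Measure E) : Prop :=
  ∀ s t : ℝ, 0 ≤ s → 0 ≤ t → s + t = 1 →
    ∀ a b c : E → ℝ, Continuous a → Continuous b → Continuous c →
      HasCompactSupport a → HasCompactSupport b → HasCompactSupport c →
      (∀ x, 0 ≤ a x) → (∀ x, 0 ≤ b x) → (∀ x, 0 ≤ c x) →
      (∀ x y, b x ^ s * c y ^ t ≤ a (s • x + t • y)) →
      (∫ x, b x ∂ρ) ^ s * (∫ x, c x ∂ρ) ^ t ≤ ∫ x, a x ∂ρ

def SuperLogConcave {n : ℕ} (α : ℝ) (ρ : Measure (EuclideanSpace ℝ (Fin n))) : Prop :=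
  PrekopaLeindler (ρ.withDensity fun x => ENNReal.ofReal (Real.exp (α / 2 * ‖x‖ ^ 2)))

open Filter Topology Set

section LogConcave

variable {E : Type*} [AddCommGroup E] [Module ℝ E]

lemma mul_rpow_mul_mul_rpow_le {u u' v v' U V s t : ℝ} (hu : 0 ≤ u) (hu' : 0 ≤ u') (hv : 0 ≤ v)
    (hv' : 0 ≤ v') (h : u ^ s * v ^ t ≤ U) (h' : u' ^ s * v' ^ t ≤ V) :
    (u * u') ^ s * (v * v') ^ t ≤ U * V := by
  rw [Real.mul_rpow hu hu', Real.mul_rpow hv hv', mul_mul_mul_comm]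
  exact mul_le_mul h h' (by positivity) ((by positivity : 0 ≤ u ^ s * v ^ t).trans h)

lemma IsLogConcave.mul {f g : E → ℝ} (hf : IsLogConcave f) (hg : IsLogConcave g)
    (hf₀ : ∀ x, 0 ≤ f x) (hg₀ : ∀ x, 0 ≤ g x) : IsLogConcave fun x => f x * g x :=
  fun x y s t hs ht hst => mul_rpow_mul_mul_rpow_le (hf₀ x) (hg₀ x) (hf₀ y) (hg₀ y)
    (hf x y s t hs ht hst) (hg x y s t hs ht hst)

lemma ConcaveOn.isLogConcave_exp {g : E → ℝ} (hg : ConcaveOn ℝ univ g) :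
    IsLogConcave fun x => Real.exp (g x) := by
  intro x y s t hs ht hst
  rw [← Real.exp_mul, ← Real.exp_mul, ← Real.exp_add, Real.exp_le_exp]
  have := hg.2 (mem_univ x) (mem_univ y) hs ht hst
  simp only [smul_eq_mul] at this
  linarith

lemma ConcaveOn.isLogConcave_max_zero {g : E → ℝ} (hg : ConcaveOn ℝ univ g) :
    IsLogConcave fun x => max 0 (g x) := by
  intro x y s t hs ht hst
  dsimp only
  rcases hs.eq_or_lt with rfl | hs'
  · obtain rfl : t = 1 := by linarith
    simp
  rcases ht.eq_or_lt with rfl | ht'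
  · obtain rfl : s = 1 := by linarith
    simp
  rcases le_or_gt (g x) 0 with hx | hx
  · rw [max_eq_left hx, Real.zero_rpow hs'.ne', zero_mul]
    exact le_max_left _ _
  rcases le_or_gt (g y) 0 with hy | hy
  · rw [max_eq_left hy, Real.zero_rpow ht'.ne', mul_zero]
    exact le_max_left _ _
  rw [max_eq_right hx.le, max_eq_right hy.le]
  calc g x ^ s * g y ^ t ≤ s * g x + t * g y :=
        Real.geom_mean_le_arith_mean2_weighted hs ht hx.le hy.le hst
    _ ≤ g (s • x + t • y) := hg.2 (mem_univ x) (mem_univ y) hs ht hst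
    _ ≤ max 0 (g (s • x + t • y)) := le_max_right _ _

end LogConcave

section RadialCutoff

variable {F : Type*} [NormedAddCommGroup F]

def radialCutoff (r : ℝ) (z : F) : ℝ := max 0 (min 1 (r - ‖z‖))

lemma radialCutoff_nonneg (r : ℝ) (z : F) : 0 ≤ radialCutoff r z := le_max_left _ _

lemma abs_radialCutoff_le_one (r : ℝ) (z : F) : |radialCutoff r z| ≤ 1 := by
  rw [abs_of_nonneg (radialCutoff_nonneg r z)]
  exact max_le zero_le_one (min_le_left _ _)

@[fun_prop]
lemma continuous_radialCutoff (r : ℝ) : Continuous (radialCutoff (F := F) r) := by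
  unfold radialCutoff
  fun_prop

lemma hasCompactSupport_radialCutoff [ProperSpace F] (r : ℝ) :
    HasCompactSupport (radialCutoff (F := F) r) :=
  HasCompactSupport.intro (isCompact_closedBall 0 r) fun z hz => by
    rw [Metric.mem_closedBall, dist_zero_right, not_le] at hz
    exact max_eq_left ((min_le_right _ _).trans (by linarith))

lemma tendsto_radialCutoff_atTop (z : F) :
    Tendsto (fun r => radialCutoff r z) atTop (𝓝 1) :=
  tendsto_const_nhds.congr' <| (eventually_ge_atTop (‖z‖ + 1)).mono fun r hr => by
    simp only [radialCutoff]
    rw [min_eq_left (by linarith), max_eq_right zero_le_one]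

lemma isLogConcave_radialCutoff [NormedSpace ℝ F] (r : ℝ) :
    IsLogConcave (radialCutoff (F := F) r) :=
  ((concaveOn_const 1 convex_univ).inf
    ((concaveOn_const r convex_univ).sub convexOn_univ_norm)).isLogConcave_max_zero

lemma isLogConcave_exp_neg_mul_sq_norm [NormedSpace ℝ F] {α : ℝ} (hα : 0 ≤ α) :
    IsLogConcave fun z : F => Real.exp (-(α / 2) * ‖z‖ ^ 2) := by
  have h : ConvexOn ℝ univ fun z : F => α / 2 * ‖z‖ ^ 2 :=
    ((convexOn_univ_norm (E := F)).pow (fun z _ => norm_nonneg z) 2).smul (by positivity)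
  refine ConcaveOn.isLogConcave_exp (neg_convexOn_iff.mp ?_)
  simpa [Pi.neg_def] using h

end RadialCutoff

lemma HasCompactSupport.mul_prod {X Y M : Type*} [TopologicalSpace X] [TopologicalSpace Y]
    [MulZeroClass M] {f : X → M} {g : Y → M} (hf : HasCompactSupport f)
    (hg : HasCompactSupport g) : HasCompactSupport fun p : X × Y => f p.1 * g p.2 :=
  HasCompactSupport.intro' (hf.prod hg) ((isClosed_tsupport f).prod (isClosed_tsupport g))
    fun p hp => by
      by_cases h : p.1 ∈ tsupport f
      · rw [image_eq_zero_of_notMem_tsupport fun h' => hp ⟨h, h'⟩, mul_zero]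
      · rw [image_eq_zero_of_notMem_tsupport h, zero_mul]

lemma integral_withDensity_ofReal {X : Type*} [MeasurableSpace X] {μ : Measure X} {w : X → ℝ}
    (hw : Measurable w) (hw₀ : ∀ x, 0 ≤ w x) (g : X → ℝ) :
    ∫ x, g x ∂μ.withDensity (fun x => ENNReal.ofReal (w x)) = ∫ x, w x * g x ∂μ := by
  rw [integral_withDensity_eq_integral_toReal_smul hw.ennreal_ofReal
    (ae_of_all _ fun _ => ofReal_lt_top)]
  simp [ENNReal.toReal_ofReal (hw₀ _)]

lemma tendsto_integral_mul_of_tendsto_one {X ι : Type*} [MeasurableSpace X] {μ : Measure X}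
    {l : Filter ι} [l.IsCountablyGenerated] {G : X → ℝ} {h : ι → X → ℝ} (hG : Integrable G μ)
    (hh : ∀ i, AEStronglyMeasurable (h i) μ) (hh₁ : ∀ i x, |h i x| ≤ 1)
    (hlim : ∀ x, Tendsto (fun i => h i x) l (𝓝 1)) :
    Tendsto (fun i => ∫ x, G x * h i x ∂μ) l (𝓝 (∫ x, G x ∂μ)) := by
  refine tendsto_integral_filter_of_dominated_convergence (fun x => ‖G x‖)
    (Eventually.of_forall fun i => hG.1.mul (hh i)) (Eventually.of_forall fun i => ?_) hG.norm
    (ae_of_all _ fun x => by simpa using (hlim x).const_mul (G x))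
  refine ae_of_all _ fun x => ?_
  rw [norm_mul]
  exact mul_le_of_le_one_right (norm_nonneg _) (hh₁ i x)

lemma integral_map_fst_withDensity {E F : Type*} [TopologicalSpace E] [MeasurableSpace E]
    [OpensMeasurableSpace E] [TopologicalSpace F] [MeasurableSpace F] [OpensMeasurableSpace F]
    {ν : Measure (E × F)} {φ : F → ℝ} (hφ : Continuous φ)
    (hφ₀ : ∀ z, 0 ≤ φ z) {f : E → ℝ} (hf : Continuous f) :
    ∫ x, f x ∂(ν.withDensity fun p => ENNReal.ofReal (φ p.2)).map Prod.fst
      = ∫ p, f p.1 * φ p.2 ∂ν := by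
  rw [integral_map measurable_fst.aemeasurable hf.aestronglyMeasurable,
    integral_withDensity_ofReal (μ := ν) (w := fun p => φ p.2) (hφ.measurable.comp measurable_snd)
      (fun p => hφ₀ p.2)]
  simp only [mul_comm]

section PrekopaLeindler

variable {E : Type*} [AddCommGroup E] [Module ℝ E] [TopologicalSpace E] [MeasurableSpace E]

lemma PrekopaLeindler.of_tendsto {ι : Type*} {l : Filter ι} [l.NeBot] {μ : ι → Measure E}
    {ν : Measure E} (hμ : ∀ i, PrekopaLeindler (μ i))
    (hlim : ∀ f : E → ℝ, Continuous f → HasCompactSupport f →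
      Tendsto (fun i => ∫ x, f x ∂μ i) l (𝓝 (∫ x, f x ∂ν))) :
    PrekopaLeindler ν := by
  intro s t hs ht hst a b c hac hbc hcc has hbs hcs ha hb hc habc
  exact le_of_tendsto_of_tendsto
    (((hlim b hbc hbs).rpow_const (Or.inr hs)).mul ((hlim c hcc hcs).rpow_const (Or.inr ht)))
    (hlim a hac has)
    (Eventually.of_forall fun i => hμ i s t hs ht hst a b c hac hbc hcc has hbs hcs ha hb hc habc)

variable [OpensMeasurableSpace E] {F : Type*} [AddCommGroup F] [Module ℝ F] [TopologicalSpace F]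
  [MeasurableSpace F] [OpensMeasurableSpace F]

theorem PrekopaLeindler.map_fst_withDensity {ν : Measure (E × F)} (hν : PrekopaLeindler ν)
    {φ : F → ℝ} (hφ : Continuous φ) (hφs : HasCompactSupport φ) (hφ₀ : ∀ z, 0 ≤ φ z)
    (hφlc : IsLogConcave φ) :
    PrekopaLeindler ((ν.withDensity fun p => ENNReal.ofReal (φ p.2)).map Prod.fst) := by
  intro s t hs ht hst a b c hac hbc hcc has hbs hcs ha hb hc habc
  simp only [integral_map_fst_withDensity hφ hφ₀ hac, integral_map_fst_withDensity hφ hφ₀ hbc,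
    integral_map_fst_withDensity hφ hφ₀ hcc]
  exact hν s t hs ht hst (fun p => a p.1 * φ p.2) (fun p => b p.1 * φ p.2)
    (fun p => c p.1 * φ p.2) (by fun_prop) (by fun_prop) (by fun_prop)
    (has.mul_prod hφs) (hbs.mul_prod hφs) (hcs.mul_prod hφs)
    (fun p => mul_nonneg (ha _) (hφ₀ _)) (fun p => mul_nonneg (hb _) (hφ₀ _))
    (fun p => mul_nonneg (hc _) (hφ₀ _)) fun p q =>
      mul_rpow_mul_mul_rpow_le (hb _) (hφ₀ _) (hc _) (hφ₀ _) (habc _ _)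
        (hφlc _ _ s t hs ht hst)

end PrekopaLeindler

lemma tendsto_integral_map_fst_withDensity_gaussian_cutoff {E F : Type*} [NormedAddCommGroup E]
    [MeasurableSpace E] [OpensMeasurableSpace E] [NormedAddCommGroup F] [MeasurableSpace F]
    [OpensMeasurableSpace F] (α : ℝ) (ρ : Measure (E × F)) [IsFiniteMeasure ρ] {f : E → ℝ}
    (hf : Continuous f) (hfs : HasCompactSupport f) :
    Tendsto (fun r => ∫ x, f x ∂(((ρ.withDensity fun p =>
        ENNReal.ofReal (Real.exp (α / 2 * (‖p.1‖ ^ 2 + ‖p.2‖ ^ 2)))).withDensity fun p =>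
          ENNReal.ofReal (Real.exp (-(α / 2) * ‖p.2‖ ^ 2) * radialCutoff r p.2)).map Prod.fst))
      atTop (𝓝 (∫ x, f x ∂(ρ.map Prod.fst).withDensity fun x =>
        ENNReal.ofReal (Real.exp (α / 2 * ‖x‖ ^ 2)))) := by
  set w : E → ℝ := fun y => Real.exp (α / 2 * ‖y‖ ^ 2)
  have hw : Continuous w := by fun_prop
  have hμr (r : ℝ) : ∫ x, f x ∂(((ρ.withDensity fun p =>
        ENNReal.ofReal (Real.exp (α / 2 * (‖p.1‖ ^ 2 + ‖p.2‖ ^ 2)))).withDensity fun p =>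
          ENNReal.ofReal (Real.exp (-(α / 2) * ‖p.2‖ ^ 2) * radialCutoff r p.2)).map Prod.fst)
      = ∫ p, w p.1 * f p.1 * radialCutoff r p.2 ∂ρ := by
    rw [integral_map_fst_withDensity
      (φ := fun z => Real.exp (-(α / 2) * ‖z‖ ^ 2) * radialCutoff r z) (by fun_prop)
      (fun z => mul_nonneg (Real.exp_pos _).le (radialCutoff_nonneg r z)) hf,
      integral_withDensity_ofReal (by fun_prop) (fun _ => (Real.exp_pos _).le)]
    congr with p
    have hcancel : Real.exp (α / 2 * (‖p.1‖ ^ 2 + ‖p.2‖ ^ 2)) * Real.exp (-(α / 2) * ‖p.2‖ ^ 2)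
        = w p.1 := by
      rw [← Real.exp_add]
      exact congrArg Real.exp (by ring)
    linear_combination f p.1 * radialCutoff r p.2 * hcancel
  have hμ : ∫ x, f x ∂(ρ.map Prod.fst).withDensity (fun x => ENNReal.ofReal (w x))
      = ∫ p, w p.1 * f p.1 ∂ρ := by
    rw [integral_withDensity_ofReal hw.measurable (fun _ => (Real.exp_pos _).le)]
    exact integral_map measurable_fst.aemeasurable (hw.mul hf).aestronglyMeasurable
  rw [tendsto_congr hμr, hμ]
  exact tendsto_integral_mul_of_tendsto_one
    (((hw.mul hf).integrable_of_hasCompactSupport hfs.mul_left).comp_measurable measurable_fst)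
    (fun r => ((continuous_radialCutoff r).measurable.comp measurable_snd).aestronglyMeasurable)
    (fun r p => abs_radialCutoff_le_one r p.2) (fun p => tendsto_radialCutoff_atTop p.2)

/-- If `ρ` is an `α`-super log-concave finite measure on
`ℝ^n × ℝ^k` (with respect to the Euclidean norm `|(y,z)|² = |y|² + |z|²`), then its
pushforward under the projection `(y, z) ↦ y` is `α`-super log-concave on `ℝ^n`. -/
theorem superLogConcave_fst_projection {n k : ℕ} (α : ℝ) (hα : 0 ≤ α)
    (ρ : Measure (EuclideanSpace ℝ (Fin n) × EuclideanSpace ℝ (Fin k)))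
    [IsFiniteMeasure ρ]
    (hρ : PrekopaLeindler
      (ρ.withDensity fun p => ENNReal.ofReal (Real.exp (α / 2 * (‖p.1‖ ^ 2 + ‖p.2‖ ^ 2))))) :
    SuperLogConcave α (ρ.map Prod.fst) := by
  refine PrekopaLeindler.of_tendsto (l := atTop) (fun r => hρ.map_fst_withDensity (by fun_prop)
      (hasCompactSupport_radialCutoff r).mul_left
      (fun z => mul_nonneg (Real.exp_pos _).le (radialCutoff_nonneg r z))
      ((isLogConcave_exp_neg_mul_sq_norm hα).mul (isLogConcave_radialCutoff r)
        (fun _ => (Real.exp_pos _).le) (radialCutoff_nonneg r)))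
    fun f hf hfs => tendsto_integral_map_fst_withDensity_gaussian_cutoff α ρ hf hfs
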